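/- arXiv:2603.05082 — 3 statements merged into one kernel-verified Lean document; each statement's English description precedes it below -/
import Mathlib

section
/- Fix a height h ≥ 1, a label 𝛕 and a non-interacting SWAP 𝛔 with indices I. Let T′ and T be the binary trees of height h with labels 𝛔𝛕 and 𝛕, let S be the interpolation complex between them, and let T′S, ST be further disjoint copies of the binary trees with labels 𝛔𝛕 and 𝛕. Define g₁ on edges by g₁‖τ̄σs, T′S⟩ = ‖τ̄σs, T′⟩ + ‖τ̄σ⋆σs, S⟩ and g₁‖τ̄s, ST⟩ = ‖τ̄σ⋆s, S⟩ + ‖τ̄s, T⟩, and g₀ by the same formulas on vertices. Then g = (g₁, g₀) is a chain map from T′S ⊕ ST to T′ ⊕ S ⊕ T (that is, g₀∘∂ = ∂∘g₁), and the mapping cone C of g satisfies: H₂(C) = 0, H₁(C) = 0, H₀(C) ≅ F₂; moreover every column of the matrix of ∂₂ᶜ has at most 4 nonzero entries and every row at most 4, and every column of ∂₁ᶜ has at most 2 nonzero entries and every row at most 9. -/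
abbrev F2 := ZMod 2

section BasicDefs
variable {α β : Type*} [Fintype α] [Fintype β]

/-- Number of nonzero entries in column `b` of matrix `M`. -/
def colW (M : Matrix α β F2) (b : β) : ℕ := (Finset.univ.filter fun a => M a b ≠ 0).card

/-- Number of nonzero entries in row `a` of matrix `M`. -/
def rowW (M : Matrix α β F2) (a : α) : ℕ := (Finset.univ.filter fun b => M a b ≠ 0).card

/-- `H₂(C) = ker ∂₂ = 0`. -/
def H2Trivial {C2 C1 : Type*} [Fintype C2] [Fintype C1] (d2 : Matrix C1 C2 F2) : Prop :=
  LinearMap.ker d2.mulVecLin = ⊥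

/-- `H₁(C) = ker ∂₁ / im ∂₂ = 0`. -/
def H1Trivial {C2 C1 C0 : Type*} [Fintype C2] [Fintype C1] [Fintype C0]
    (d2 : Matrix C1 C2 F2) (d1 : Matrix C0 C1 F2) : Prop :=
  LinearMap.ker d1.mulVecLin = LinearMap.range d2.mulVecLin

/-- `H₀(C) ≅ F₂`. -/
def H0IsF2 {C1 C0 : Type*} [Fintype C1] [Fintype C0] (d1 : Matrix C0 C1 F2) : Prop :=
  Nonempty (((C0 → F2) ⧸ LinearMap.range d1.mulVecLin) ≃ₗ[F2] F2)

end BasicDefs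

/-- The action of a permutation of positions on a list: `(π · l) j = l (π⁻¹ j)`. -/
def permList {α : Type*} [Inhabited α] (π : Equiv.Perm ℕ) (l : List α) : List α :=
  (List.range l.length).map fun j => l.getD (π.symm j) default

/-- A label of height `h`: a family of permutations `τ_ℓ` of the positions `{0, …, ℓ-1}`
(0-indexed); each `τ_ℓ` fixes all positions `≥ ℓ`. -/
def IsLabel (h : ℕ) (τ : ℕ → Equiv.Perm ℕ) : Prop :=
  ∀ ℓ j, ℓ ≤ h → ℓ ≤ j → τ ℓ j = j

/-- `σ` is the non-interacting SWAP of height `h` with (0-indexed) indices `I`. -/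
def IsNonInteractingSwap (h : ℕ) (I : Finset ℕ) (σ : ℕ → Equiv.Perm ℕ) : Prop :=
  (∀ i ∈ I, i + 2 ≤ h) ∧
  (∀ i ∈ I, ∀ j ∈ I, i ≠ j → i + 2 ≤ j ∨ j + 2 ≤ i) ∧
  (∀ ℓ, ∀ i ∈ I, i + 2 ≤ ℓ → σ ℓ i = i + 1 ∧ σ ℓ (i + 1) = i) ∧
  (∀ ℓ j, (¬∃ i ∈ I, i + 2 ≤ ℓ ∧ (j = i ∨ j = i + 1)) → σ ℓ j = j)

/-- The map `σ⋆` from bit strings to starred strings (`⋆` is `none`). -/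
def sigmaStar (I : Finset ℕ) (s : List Bool) : List (Option Bool) :=
  if s ≠ [] ∧ (s.length - 1) ∈ I then (s.dropLast.map some) ++ [none] else s.map some

/-- A finiteness helper: subtypes of lists with bounded length are finite. -/
noncomputable def fintypeListSub {α : Type*} [Finite α] (n : ℕ) (P : List α → Prop)
    (hP : ∀ l, P l → l.length ≤ n) : Fintype {l : List α // P l} :=
  have : Finite {l : List α // P l} :=
    Set.Finite.to_subtype ((List.finite_length_le α n).subset fun l hl => hP l hl)
  Fintype.ofFinite _

/-- Vertices of the binary tree of height `h` with labels `𝛕`, indexed by the label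
strings `τ̄s`, `‖s‖ ≤ h` (equivalently, all bit strings of length at most `h`). -/
abbrev TreeV (h : ℕ) := {l : List Bool // l.length ≤ h}

/-- Edges of the binary tree of height `h`, indexed by label strings `τ̄s`, `1 ≤ ‖s‖ ≤ h`. -/
abbrev TreeE (h : ℕ) := {l : List Bool // 1 ≤ l.length ∧ l.length ≤ h}

noncomputable instance (h : ℕ) : Fintype (TreeV h) := fintypeListSub h _ fun _ hl => hl
noncomputable instance (h : ℕ) : Fintype (TreeE h) := fintypeListSub h _ fun _ hl => hl.2

/-- The second endpoint of the tree edge with label string `e`: the edge `‖τ̄s⟩` (where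
`s = τe`) has endpoints `|τ̄s⟩ = |e⟩` and `|τ̄(ωs)⟩ = parentStr τ e`. -/
def parentStr (τ : ℕ → Equiv.Perm ℕ) (e : List Bool) : List Bool :=
  permList ((τ (e.length - 1))⁻¹) ((permList (τ e.length) e).dropLast)

/-- The differential of the binary tree of height `h` with labels `𝛕`:
`∂ ‖τ̄s⟩ = |τ̄s⟩ + |τ̄(ωs)⟩`. -/
def treeMat (h : ℕ) (τ : ℕ → Equiv.Perm ℕ) : Matrix (TreeV h) (TreeE h) F2 :=
  fun v e => if v.1 = e.1 ∨ v.1 = parentStr τ e.1 then 1 else 0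

/-- `u` is a starred string in the image of `σ⋆`: only the last entry may be the
placeholder `⋆ = none`, and (for nonempty `u`) the last entry is `⋆` iff the last
position belongs to `I`. -/
def IsStarStr (I : Finset ℕ) (u : List (Option Bool)) : Prop :=
  (∀ i, i + 1 < u.length → u.getD i none ≠ none) ∧
  (u ≠ [] → ((u.length - 1) ∈ I ↔ u.getD (u.length - 1) none = none))

/-- Vertices of the interpolation complex `S` between the trees with labels `𝛔𝛕` and `𝛕`,
indexed by the label strings `τ̄(σ⋆ s)`, `‖s‖ ≤ h`. -/
abbrev SV (h : ℕ) (I : Finset ℕ) (τ : ℕ → Equiv.Perm ℕ) :=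
  {y : List (Option Bool) // y.length ≤ h ∧ IsStarStr I (permList (τ y.length) y)}

/-- Edges of the interpolation complex `S`, indexed by the label strings `τ̄(σ⋆ s)`,
`1 ≤ ‖s‖ ≤ h`. -/
abbrev SE (h : ℕ) (I : Finset ℕ) (τ : ℕ → Equiv.Perm ℕ) :=
  {y : List (Option Bool) // 1 ≤ y.length ∧ y.length ≤ h ∧
    IsStarStr I (permList (τ y.length) y)}

noncomputable instance (h : ℕ) (I : Finset ℕ) (τ : ℕ → Equiv.Perm ℕ) :
    Fintype (SV h I τ) := fintypeListSub h _ fun _ hl => hl.1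

noncomputable instance (h : ℕ) (I : Finset ℕ) (τ : ℕ → Equiv.Perm ℕ) :
    Fintype (SE h I τ) := fintypeListSub h _ fun _ hl => hl.2.1

/-- Remove the last entry of a starred string and forget the starring: this recovers
`ωs` from `σ⋆s`. -/
def plainDrop (u : List (Option Bool)) : List Bool :=
  u.dropLast.map fun o => o.getD false

/-- The second endpoint of the interpolation edge with label string `y = τ̄(σ⋆s)`:
`∂ˢ‖τ̄σ⋆s⟩ = |τ̄σ⋆s⟩ + |τ̄σ⋆(ωs)⟩`, and `τ̄σ⋆(ωs) = sParent I τ y`. -/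
def sParent (I : Finset ℕ) (τ : ℕ → Equiv.Perm ℕ) (y : List (Option Bool)) :
    List (Option Bool) :=
  permList ((τ (y.length - 1))⁻¹) (sigmaStar I (plainDrop (permList (τ y.length) y)))

/-- The differential of the interpolation complex `S`. -/
def sMat (h : ℕ) (I : Finset ℕ) (τ : ℕ → Equiv.Perm ℕ) :
    Matrix (SV h I τ) (SE h I τ) F2 :=
  fun v e => if v.1 = e.1 ∨ v.1 = sParent I τ e.1 then 1 else 0

/-- The label string `τ̄(σ⋆(τ x))` of the `S`-term of the image of the chain map `g` on
the edge/vertex with label string `x`: for a `T′S`-edge `x = τ̄σs` (so `σs = τx`) this is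
`τ̄σ⋆σs`, and for an `ST`-edge `x = τ̄s` (so `s = τx`) this is `τ̄σ⋆s`. -/
def starLabel (I : Finset ℕ) (τ : ℕ → Equiv.Perm ℕ) (x : List Bool) :
    List (Option Bool) :=
  permList ((τ x.length)⁻¹) (sigmaStar I (permList (τ x.length) x))

section Cone
variable (h : ℕ) (I : Finset ℕ) (σ τ : ℕ → Equiv.Perm ℕ)

/-- Differential of `A = T′S ⊕ ST` (two fresh copies of the binary trees with labels
`𝛔𝛕` and `𝛕`). -/
def dA : Matrix (TreeV h ⊕ TreeV h) (TreeE h ⊕ TreeE h) F2 :=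
  Matrix.fromBlocks (treeMat h fun ℓ => σ ℓ * τ ℓ) 0 0 (treeMat h τ)

/-- Differential of `B = T′ ⊕ S ⊕ T`. -/
def dB : Matrix (TreeV h ⊕ (SV h I τ ⊕ TreeV h)) (TreeE h ⊕ (SE h I τ ⊕ TreeE h)) F2 :=
  Matrix.fromBlocks (treeMat h fun ℓ => σ ℓ * τ ℓ) 0 0
    (Matrix.fromBlocks (sMat h I τ) 0 0 (treeMat h τ))

/-- The chain map `g₁` on edges:
`g₁‖τ̄σs, T′S⟩ = ‖τ̄σs, T′⟩ + ‖τ̄σ⋆σs, S⟩` and `g₁‖τ̄s, ST⟩ = ‖τ̄σ⋆s, S⟩ + ‖τ̄s, T⟩`. -/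
def g1 : Matrix (TreeE h ⊕ (SE h I τ ⊕ TreeE h)) (TreeE h ⊕ TreeE h) F2 :=
  fun eb ea =>
    match eb, ea with
    | Sum.inl x', Sum.inl x => if x' = x then 1 else 0
    | Sum.inr (Sum.inl y), Sum.inl x => if y.1 = starLabel I τ x.1 then 1 else 0
    | Sum.inr (Sum.inl y), Sum.inr x => if y.1 = starLabel I τ x.1 then 1 else 0
    | Sum.inr (Sum.inr x'), Sum.inr x => if x' = x then 1 else 0
    | _, _ => 0

/-- The chain map `g₀` on vertices (same formulas as `g₁`). -/
def g0 : Matrix (TreeV h ⊕ (SV h I τ ⊕ TreeV h)) (TreeV h ⊕ TreeV h) F2 :=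
  fun vb va =>
    match vb, va with
    | Sum.inl x', Sum.inl x => if x' = x then 1 else 0
    | Sum.inr (Sum.inl y), Sum.inl x => if y.1 = starLabel I τ x.1 then 1 else 0
    | Sum.inr (Sum.inl y), Sum.inr x => if y.1 = starLabel I τ x.1 then 1 else 0
    | Sum.inr (Sum.inr x'), Sum.inr x => if x' = x then 1 else 0
    | _, _ => 0

/-- The degree-2 differential of the mapping cone `C` of `g`: `∂₂ a = (∂ᴬ a, g₁ a)`. -/
def coneD2 :
    Matrix ((TreeV h ⊕ TreeV h) ⊕ (TreeE h ⊕ (SE h I τ ⊕ TreeE h)))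
      (TreeE h ⊕ TreeE h) F2 :=
  fun r c => Sum.elim (fun va => dA h σ τ va c) (fun eb => g1 h I τ eb c) r

/-- The degree-1 differential of the mapping cone `C` of `g`:
`∂₁ (a₀, b₁) = g₀ a₀ + ∂ᴮ b₁`. -/
def coneD1 :
    Matrix (TreeV h ⊕ (SV h I τ ⊕ TreeV h))
      ((TreeV h ⊕ TreeV h) ⊕ (TreeE h ⊕ (SE h I τ ⊕ TreeE h))) F2 :=
  fun v r => Sum.elim (fun va => g0 h I τ v va) (fun eb => dB h I σ τ v eb) r

end Cone


/-!
Each of the four trees and the interpolation complex `S` is the graph complex of a rooted forest: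
an edge joins its own label string to a parent label string of smaller length, so its boundary map
is injective, and `H₂(C) = 0` follows at once. The chain-map identity reduces edge by edge to
`σ⋆ ω σ = σ⋆ σ ω`, which holds because below position `ℓ - 1` the swaps `σ_ℓ` and `σ_{ℓ-1}` differ
only at the position that `σ⋆` stars. For `H₁(C) = 0`, the `T′`- and `T`-components of a cycle
`(a₀, b₁)` give `a₀ = ∂a₁`, and injectivity of `∂` on `T′ ⊕ S ⊕ T` then forces `b₁ = g₁ a₁`.
Since `S` has one more vertex than edges, `C` has Euler characteristic `1`, and `H₀(C) ≅ F₂` by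
counting dimensions. For the weights: a tree vertex has at most two children (told apart by the
last bit of `s`), an `S`-vertex at most four (the last two bits), and `σ⋆` is at most two-to-one.
-/

section GraphComplex
open Finset Matrix
variable {V E : Type*} [DecidableEq V]

def graphMat (s t : E → V) : Matrix V E F2 :=
  of fun v e => (Pi.single (s e) 1 + Pi.single (t e) 1 : V → F2) v

lemma graphMat_apply (s t : E → V) (v : V) (e : E) :
    graphMat s t v e = (if v = s e then 1 else 0) + (if v = t e then 1 else 0) := by
  simp [graphMat, Pi.single_apply]

lemma graphMat_eq_ite {s t : E → V} (hst : ∀ e, s e ≠ t e) :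
    (of fun v e => if v = s e ∨ v = t e then (1 : F2) else 0) = graphMat s t := by
  ext v e
  rw [graphMat_apply]
  by_cases h₁ : v = s e <;> by_cases h₂ : v = t e
  · exact absurd (h₁.symm.trans h₂) (hst e)
  all_goals simp [h₁, h₂, hst e, (hst e).symm]

lemma mul_graphMat_apply [Fintype V] {W : Type*} (M : Matrix W V F2) (s t : E → V) (w : W)
    (e : E) : (M * graphMat s t) w e = M w (s e) + M w (t e) := by
  simp [mul_apply, graphMat_apply, mul_add, Finset.sum_add_distrib]

lemma graphMat_mul_graphMat_comm {A₀ A₁ B₁ : Type*} [Fintype A₀] [DecidableEq A₀]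
    [Fintype B₁] [DecidableEq B₁] {s₀ t₀ : A₀ → V} {sA tA : A₁ → A₀} {sB tB : B₁ → V}
    {s₁ t₁ : A₁ → B₁} (hss : ∀ a, s₀ (sA a) = sB (s₁ a)) (hts : ∀ a, t₀ (sA a) = sB (t₁ a))
    (hst : ∀ a, s₀ (tA a) = tB (s₁ a)) (htt : ∀ a, t₀ (tA a) = tB (t₁ a)) :
    graphMat s₀ t₀ * graphMat sA tA = graphMat sB tB * graphMat s₁ t₁ := by
  ext v a
  simp only [mul_graphMat_apply, graphMat_apply, hss, hts, hst, htt]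
  abel

lemma fromBlocks_graphMat {V' E' : Type*} [DecidableEq V'] (s t : E → V) (s' t' : E' → V') :
    fromBlocks (graphMat s t) 0 0 (graphMat s' t') = graphMat (Sum.map s s') (Sum.map t t') := by
  ext (v | v) (e | e) <;> simp [graphMat_apply]

lemma fromCols_graphMat {E' : Type*} (s t : E → V) (s' t' : E' → V) :
    fromCols (graphMat s t) (graphMat s' t') = graphMat (Sum.elim s s') (Sum.elim t t') := by
  ext v (e | e) <;> rfl

lemma sum_graphMat_apply [Fintype V] (s t : E → V) (e : E) : ∑ v, graphMat s t v e = 0 := by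
  simp only [graphMat_apply, Finset.sum_add_distrib, Finset.sum_ite_eq', Finset.mem_univ,
    if_true]
  exact CharTwo.add_self_eq_zero 1

/-- Look at a deepest edge in the support of a cycle. -/
lemma injective_mulVec_graphMat [Fintype E] {s t : E → V} (hs : Function.Injective s)
    (depth : V → ℕ) (hdepth : ∀ e, depth (t e) < depth (s e)) :
    Function.Injective (graphMat s t).mulVec := by
  suffices h : ∀ x, graphMat s t *ᵥ x = 0 → x = 0 by
    intro x y hxy
    exact sub_eq_zero.mp (h _ (by rw [mulVec_sub, hxy, sub_self]))
  intro x hx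
  by_contra hne
  obtain ⟨e, he, hmax⟩ := Finset.exists_max_image {e | x e ≠ 0} (fun e => depth (s e))
    (Function.ne_iff.mp hne |>.imp fun e he => by simpa using he)
  have hrow : (graphMat s t *ᵥ x) (s e) = x e := by
    rw [mulVec, dotProduct, Finset.sum_eq_single e]
    · have : s e ≠ t e := fun h => by have := hdepth e; rw [h] at this; omega
      simp [graphMat_apply, this]
    · intro e' _ he'
      by_cases hx' : x e' = 0
      · rw [hx', mul_zero]
      have := hmax e' (by simpa using hx')
      have hs' : s e ≠ s e' := hs.ne (Ne.symm he')
      have ht' : s e ≠ t e' := fun h => by have := hdepth e'; rw [← h] at this; omega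
      simp [graphMat_apply, hs', ht']
    · simp
  simp only [mem_filter, mem_univ, true_and] at he
  exact he (hrow.symm.trans (congrFun hx (s e)))

lemma colW_graphMat_le [Fintype V] [Fintype E] (s t : E → V) (e : E) :
    colW (graphMat s t) e ≤ 2 := by
  refine (card_le_card (t := {s e, t e}) fun v hv => ?_).trans card_le_two
  simp only [mem_filter, mem_univ, true_and, graphMat_apply] at hv
  simp only [mem_insert, mem_singleton]
  by_contra! h
  simp [h.1, h.2] at hv

lemma rowW_graphMat_le [Fintype E] (s t : E → V) (v : V) :
    rowW (graphMat s t) v ≤ {e | s e = v}.ncard + {e | t e = v}.ncard := by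
  rw [rowW, ← Set.ncard_coe_finset, coe_filter_univ]
  refine (Set.ncard_le_ncard fun e he => ?_).trans (Set.ncard_union_le _ _)
  simp only [Set.mem_ofPred_eq, graphMat_apply, Set.mem_union] at he ⊢
  by_contra! h
  simp [Ne.symm h.1, Ne.symm h.2] at he

end GraphComplex

section Counting
open Finset Matrix
variable {α β κ : Type*}

lemma ncard_setOf_sum [Finite α] [Finite β] (p : α ⊕ β → Prop) :
    {c | p c}.ncard = {a | p (Sum.inl a)}.ncard + {b | p (Sum.inr b)}.ncard := by
  have : {c | p c} = Sum.inl '' {a | p (Sum.inl a)} ∪ Sum.inr '' {b | p (Sum.inr b)} := by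
    ext (a | b) <;> simp
  have hdisj : Disjoint (Sum.inl '' {a | p (Sum.inl a)}) (Sum.inr '' {b | p (Sum.inr b)}) :=
    Set.disjoint_left.mpr (by rintro _ ⟨a, -, rfl⟩ ⟨b, -, hb⟩; cases hb)
  rw [this, Set.ncard_union_eq hdisj, Set.ncard_image_of_injective _ Sum.inl_injective,
    Set.ncard_image_of_injective _ Sum.inr_injective]

lemma ncard_fiber_le [Finite κ] (f : α → β) (c : α → κ)
    (hc : ∀ a a', f a = f a' → c a = c a' → a = a') (b : β) :
    {a | f a = b}.ncard ≤ Nat.card κ := by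
  rw [← Set.ncard_univ]
  exact Set.ncard_le_ncard_of_injOn c (fun _ _ => Set.mem_univ _)
    fun a ha a' ha' h => hc a a' (ha.trans ha'.symm) h

lemma colW_fromRows [Fintype α] [Fintype β] {γ : Type*} (M : Matrix α γ F2)
    (N : Matrix β γ F2) (c : γ) : colW (fromRows M N) c = colW M c + colW N c := by
  simp only [colW, card_filter, Fintype.sum_sum_type]
  rfl

lemma rowW_fromRows_inl {γ : Type*} [Fintype γ] (M : Matrix α γ F2)
    (N : Matrix β γ F2) (a : α) : rowW (fromRows M N) (Sum.inl a) = rowW M a :=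
  rfl

lemma rowW_fromRows_inr {γ : Type*} [Fintype γ] (M : Matrix α γ F2)
    (N : Matrix β γ F2) (b : β) : rowW (fromRows M N) (Sum.inr b) = rowW N b :=
  rfl

end Counting

section MappingCone
open Matrix
variable {A₀ A₁ B₀ B₁ : Type*} [Fintype A₀] [Fintype A₁] [Fintype B₀] [Fintype B₁]
  {dA : Matrix A₀ A₁ F2} {dB : Matrix B₀ B₁ F2} {g₀ : Matrix B₀ A₀ F2} {g₁ : Matrix B₁ A₁ F2}

lemma H2Trivial_fromRows (hA : Function.Injective dA.mulVec) : H2Trivial (fromRows dA g₁) := by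
  rw [H2Trivial, LinearMap.ker_eq_bot]
  intro x y hxy
  apply hA
  simpa using congrArg (fun z => z ∘ Sum.inl) hxy

lemma H1Trivial_fromRows_fromCols (hchain : g₀ * dA = dB * g₁)
    (hB : Function.Injective dB.mulVec)
    (hlift : ∀ a b, g₀ *ᵥ a = dB *ᵥ b → ∃ a₁, dA *ᵥ a₁ = a) :
    H1Trivial (fromRows dA g₁) (fromCols g₀ dB) := by
  refine le_antisymm (fun z hz => ?_) ?_
  · rw [LinearMap.mem_ker, mulVecLin_apply, fromCols_mulVec] at hz
    have hcycle : g₀ *ᵥ (z ∘ Sum.inl) = dB *ᵥ (z ∘ Sum.inr) :=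
      funext fun v => CharTwo.add_eq_zero.mp (congrFun hz v)
    obtain ⟨a₁, ha₁⟩ := hlift _ _ hcycle
    have hg₁ : g₁ *ᵥ a₁ = z ∘ Sum.inr :=
      hB (by rw [mulVec_mulVec, ← hchain, ← mulVec_mulVec, ha₁, hcycle])
    refine ⟨a₁, ?_⟩
    rw [mulVecLin_apply, fromRows_mulVec, ha₁, hg₁]
    ext (_ | _) <;> rfl
  · rintro _ ⟨a₁, rfl⟩
    rw [LinearMap.mem_ker, mulVecLin_apply, mulVecLin_apply, mulVec_mulVec,
      fromCols_mul_fromRows, hchain, add_mulVec]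
    exact funext fun v => CharTwo.add_self_eq_zero _

lemma H0IsF2_of_euler {C₂ C₁ C₀ : Type*} [Fintype C₂] [Fintype C₁] [Fintype C₀] [Nonempty C₀]
    {d₂ : Matrix C₁ C₂ F2} {d₁ : Matrix C₀ C₁ F2} (h₂ : H2Trivial d₂) (h₁ : H1Trivial d₂ d₁)
    (hcol : ∀ c, ∑ v, d₁ v c = 0)
    (hχ : Fintype.card C₀ + Fintype.card C₂ = Fintype.card C₁ + 1) : H0IsF2 d₁ := by
  classical
  let ε : (C₀ → F2) →ₗ[F2] F2 := ∑ v, LinearMap.proj v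
  have hε : ∀ x, ε x = ∑ v, x v := fun x => by simp [ε]
  have hsurj : Function.Surjective ε := fun c =>
    ⟨Pi.single (Classical.arbitrary C₀) c, by simp [hε]⟩
  have hle : LinearMap.range d₁.mulVecLin ≤ LinearMap.ker ε := by
    rintro _ ⟨x, rfl⟩
    rw [LinearMap.mem_ker, hε, mulVecLin_apply]
    simp only [mulVec, dotProduct]
    rw [Finset.sum_comm]
    simp [← Finset.sum_mul, hcol]
  have hrank₁ := LinearMap.finrank_range_add_finrank_ker d₁.mulVecLin
  have hrank₂ := LinearMap.finrank_range_add_finrank_ker d₂.mulVecLin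
  have hrankε := LinearMap.finrank_range_add_finrank_ker ε
  rw [LinearMap.range_eq_top.mpr hsurj, finrank_top] at hrankε
  rw [h₁] at hrank₁
  rw [H2Trivial] at h₂
  rw [h₂, finrank_bot] at hrank₂
  simp only [Module.finrank_fintype_fun_eq_card, Module.finrank_self] at hrank₁ hrank₂ hrankε
  have heq : LinearMap.range d₁.mulVecLin = LinearMap.ker ε :=
    Submodule.eq_of_le_of_finrank_eq hle (by omega)
  exact ⟨(Submodule.quotEquivOfEq _ _ heq).trans (ε.quotKerEquivOfSurjective hsurj)⟩

end MappingCone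

lemma List.eq_of_dropLast_eq_of_getLastD_eq {α : Type*} {l l' : List α} {d : α}
    (hlen : l.length = l'.length) (hdrop : l.dropLast = l'.dropLast)
    (hlast : l.getLastD d = l'.getLastD d) : l = l' := by
  rcases eq_or_ne l [] with rfl | hl
  · exact (List.length_eq_zero_iff.mp hlen.symm).symm
  have hl' : l' ≠ [] := by rintro rfl; exact hl (List.length_eq_zero_iff.mp hlen)
  rw [← List.dropLast_concat_getLast hl, ← List.dropLast_concat_getLast hl', hdrop]
  simp_all [List.getLast?_eq_some_getLast]

section PermList
variable {α : Type*} [Inhabited α]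

def FixesFrom (π : Equiv.Perm ℕ) (n : ℕ) : Prop := ∀ j, n ≤ j → π j = j

lemma FixesFrom.inv {π : Equiv.Perm ℕ} {n : ℕ} (h : FixesFrom π n) : FixesFrom π⁻¹ n :=
  fun j hj => by rw [Equiv.Perm.inv_eq_iff_eq, h j hj]

lemma FixesFrom.symm_lt {π : Equiv.Perm ℕ} {n j : ℕ} (h : FixesFrom π n) (hj : j < n) :
    π.symm j < n := by
  by_contra! hc
  have := h _ hc
  rw [Equiv.apply_symm_apply] at this
  omega

lemma FixesFrom.mul {π ρ : Equiv.Perm ℕ} {n : ℕ} (hπ : FixesFrom π n) (hρ : FixesFrom ρ n) :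
    FixesFrom (π * ρ) n :=
  fun j hj => by rw [Equiv.Perm.mul_apply, hρ j hj, hπ j hj]

lemma IsLabel.fixesFrom {h : ℕ} {τ : ℕ → Equiv.Perm ℕ} (hτ : IsLabel h τ) {ℓ : ℕ} (hℓ : ℓ ≤ h) :
    FixesFrom (τ ℓ) ℓ :=
  fun j hj => hτ ℓ j hℓ hj

@[simp] lemma permList_length (π : Equiv.Perm ℕ) (l : List α) :
    (permList π l).length = l.length := by
  simp [permList]

lemma permList_getD (π : Equiv.Perm ℕ) (l : List α) {j : ℕ} (hj : j < l.length) (d : α) :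
    (permList π l).getD j d = l.getD (π.symm j) default := by
  simp [permList, List.getD_eq_getElem?_getD, hj]

lemma permList_getElem? (π : Equiv.Perm ℕ) {l : List α} {j : ℕ} (hj : j < l.length)
    (hπ : π.symm j < l.length) : (permList π l)[j]? = l[π.symm j]? := by
  simp [permList, hj, List.getD_eq_getElem?_getD, List.getElem?_eq_getElem hπ]

@[simp] lemma permList_one (l : List α) : permList 1 l = l := by
  refine List.ext_getElem (by simp) fun j hj _ => ?_
  have hj' : j < l.length := by simpa using hj
  simp [permList, List.getD_eq_getElem?_getD, Equiv.Perm.one_def, List.getElem?_eq_getElem hj']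

lemma permList_mul {π : Equiv.Perm ℕ} {l : List α} (hπ : FixesFrom π l.length)
    (ρ : Equiv.Perm ℕ) : permList (π * ρ) l = permList π (permList ρ l) := by
  refine List.ext_getElem (by simp) fun j hj _ => ?_
  have hj' : j < l.length := by simpa using hj
  rw [← List.getD_eq_getElem _ default, ← List.getD_eq_getElem _ default, permList_getD _ _ hj',
    permList_getD _ _ (by simpa using hj'), permList_getD _ _ (hπ.symm_lt hj')]
  rfl

lemma permList_permList_inv {π : Equiv.Perm ℕ} {l : List α} (hπ : FixesFrom π l.length) :
    permList π (permList π⁻¹ l) = l := by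
  rw [← permList_mul hπ, mul_inv_cancel, permList_one]

lemma permList_inv_permList {π : Equiv.Perm ℕ} {l : List α} (hπ : FixesFrom π l.length) :
    permList π⁻¹ (permList π l) = l := by
  rw [← permList_mul hπ.inv, inv_mul_cancel, permList_one]

lemma permList_injective {π : Equiv.Perm ℕ} {l l' : List α} (hlen : l.length = l'.length)
    (hπ : FixesFrom π l.length) (heq : permList π l = permList π l') : l = l' := by
  rw [← permList_inv_permList hπ, heq, permList_inv_permList (hlen ▸ hπ)]

end PermList

section SigmaStar
variable {I : Finset ℕ}

def unstar (u : List (Option Bool)) : List Bool := u.map (Option.getD · false)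

@[simp] lemma sigmaStar_length (I : Finset ℕ) (s : List Bool) :
    (sigmaStar I s).length = s.length := by
  unfold sigmaStar
  split_ifs with hs
  · simp [Nat.sub_add_cancel (List.length_pos_iff.mpr hs.1)]
  · simp

lemma sigmaStar_getElem? (I : Finset ℕ) (s : List Bool) (j : ℕ) :
    (sigmaStar I s)[j]? = if j + 1 = s.length ∧ j ∈ I then some none else s[j]?.map some := by
  unfold sigmaStar
  split_ifs with hs hj hj
  · obtain rfl : j = s.length - 1 := by omega
    simp
  · have hpos := List.length_pos_iff.mpr hs.1
    have hj' : j + 1 ≠ s.length := fun h =>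
      hj ⟨h, by rw [show j = s.length - 1 by omega]; exact hs.2⟩
    rcases lt_or_ge (j + 1) s.length with hlt | hge
    · simp [List.getElem?_append, Nat.lt_sub_iff_add_lt.mpr hlt]
    · rw [List.getElem?_eq_none (by simp; omega), List.getElem?_eq_none (by omega : s.length ≤ j)]
      rfl
  · refine absurd ⟨List.ne_nil_of_length_pos (by omega), ?_⟩ hs
    rw [← hj.1, Nat.add_sub_cancel]
    exact hj.2
  · simp

lemma getD_sigmaStar (I : Finset ℕ) (s : List Bool) (j : ℕ) :
    (sigmaStar I s).getD j none = if j + 1 = s.length ∧ j ∈ I then none else s[j]? := by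
  rw [List.getD_eq_getElem?_getD, sigmaStar_getElem?]
  split_ifs <;> cases s[j]? <;> rfl

lemma isStarStr_sigmaStar (I : Finset ℕ) (s : List Bool) : IsStarStr I (sigmaStar I s) := by
  constructor
  · intro i hi
    rw [sigmaStar_length] at hi
    rw [getD_sigmaStar, if_neg (by omega), List.getElem?_eq_getElem (by omega)]
    simp
  · intro hne
    have hpos : 0 < s.length := by simpa using List.length_pos_iff.mpr hne
    rw [sigmaStar_length, getD_sigmaStar, Nat.sub_add_cancel hpos]
    by_cases hI : s.length - 1 ∈ I
    · simp [hI]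
    · simp [hI, List.getElem?_eq_getElem (Nat.sub_lt hpos one_pos)]

lemma sigmaStar_unstar {u : List (Option Bool)} (hu : IsStarStr I u) :
    sigmaStar I (unstar u) = u := by
  refine List.ext_getElem? fun j => ?_
  rw [sigmaStar_getElem?]
  simp only [unstar, List.length_map, List.getElem?_map, Option.map_map]
  rcases lt_or_ge j u.length with hj | hj
  · have hne : u ≠ [] := List.ne_nil_of_length_pos (by omega)
    have hlast := hu.2 hne
    rw [List.getElem?_eq_getElem hj]
    split_ifs with h
    · obtain ⟨hj₁, hjI⟩ := h
      obtain rfl : j = u.length - 1 := by omega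
      have := hlast.mp hjI
      rw [List.getD_eq_getElem _ _ hj] at this
      simp [this]
    · have : u[j] ≠ none := by
        rw [← List.getD_eq_getElem _ none]
        rcases lt_or_eq_of_le (show j + 1 ≤ u.length by omega) with hj' | hj'
        · exact hu.1 j hj'
        · rw [show j = u.length - 1 by omega] at h ⊢
          exact fun hn => h ⟨by omega, hlast.mpr hn⟩
      obtain ⟨b, hb⟩ := Option.ne_none_iff_exists'.mp this
      simp [hb]
  · simp [List.getElem?_eq_none hj]
    omega

lemma sigmaStar_congr {s s' : List Bool} (hlen : s.length = s'.length)
    (h : ∀ j < s.length, ¬(j + 1 = s.length ∧ j ∈ I) → s[j]? = s'[j]?) :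
    sigmaStar I s = sigmaStar I s' := by
  refine List.ext_getElem? fun j => ?_
  rw [sigmaStar_getElem?, sigmaStar_getElem?, ← hlen]
  split_ifs with hj
  · rfl
  · rcases lt_or_ge j s.length with hj' | hj'
    · rw [h j hj' hj]
    · simp [List.getElem?_eq_none hj', List.getElem?_eq_none (hlen ▸ hj')]

@[simp] lemma plainDrop_length (u : List (Option Bool)) :
    (plainDrop u).length = u.length - 1 := by
  simp [plainDrop]

lemma plainDrop_sigmaStar (I : Finset ℕ) (s : List Bool) :
    plainDrop (sigmaStar I s) = s.dropLast := by
  refine List.ext_getElem? fun j => ?_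
  simp only [plainDrop, List.getElem?_map, List.getElem?_dropLast, sigmaStar_length,
    sigmaStar_getElem?]
  split_ifs with h₁ h₂ <;> first | omega | simp

@[simp] lemma unstar_length (u : List (Option Bool)) : (unstar u).length = u.length :=
  List.length_map _

lemma plainDrop_eq_dropLast_unstar (u : List (Option Bool)) :
    plainDrop u = (unstar u).dropLast :=
  List.map_dropLast

end SigmaStar

section Swap
variable {h : ℕ} {I : Finset ℕ} {σ : ℕ → Equiv.Perm ℕ}

lemma IsNonInteractingSwap.fixesFrom (hσ : IsNonInteractingSwap h I σ) (ℓ : ℕ) :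
    FixesFrom (σ ℓ) ℓ :=
  fun j hj => hσ.2.2.2 ℓ j (by rintro ⟨i, -, hi, rfl | rfl⟩ <;> omega)

lemma IsNonInteractingSwap.apply_succ (hσ : IsNonInteractingSwap h I σ) {n j : ℕ} (hj : j < n)
    (hex : ¬(j + 1 = n ∧ j ∈ I)) : σ (n + 1) j = σ n j := by
  obtain ⟨-, -, hswap, hfix⟩ := hσ
  by_cases hc : ∃ i ∈ I, i + 2 ≤ n ∧ (j = i ∨ j = i + 1)
  · obtain ⟨i, hi, hin, rfl | rfl⟩ := hc
    · rw [(hswap _ j hi (by omega)).1, (hswap _ j hi hin).1]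
    · rw [(hswap _ i hi (by omega)).2, (hswap _ i hi hin).2]
  · rw [hfix n j hc, hfix (n + 1) j]
    rintro ⟨i, hi, hin, hji⟩
    rcases le_or_gt (i + 2) n with hin' | hin'
    · exact hc ⟨i, hi, hin', hji⟩
    · rcases hji with rfl | rfl
      · exact hex ⟨by omega, hi⟩
      · omega

/-- The identity `σ⋆ ω σ = σ⋆ σ ω` on strings of length `n + 1`. -/
lemma sigmaStar_permList_dropLast (hσ : IsNonInteractingSwap h I σ) {n : ℕ} (u : List Bool)
    (hu : u.length = n + 1) :
    sigmaStar I (permList (σ n)⁻¹ (permList (σ (n + 1)) u).dropLast) =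
      sigmaStar I u.dropLast := by
  refine sigmaStar_congr (by simp [hu]) fun j hj hex => ?_
  simp only [permList_length, List.length_dropLast, hu, Nat.add_sub_cancel] at hj hex
  have hσj : (σ n)⁻¹.symm j < n := (hσ.fixesFrom n).inv.symm_lt hj
  rw [permList_getElem? _ (by simpa [hu] using hj) (by simpa [hu] using hσj),
    List.getElem?_dropLast, if_pos (by simpa [hu] using hσj),
    permList_getElem? _ (by omega) (by rw [hu]; exact (hσ.fixesFrom _).symm_lt (by omega)),
    List.getElem?_dropLast, if_pos (by omega)]
  exact congrArg _ ((Equiv.symm_apply_eq _).mpr (hσ.apply_succ hj hex).symm)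

end Swap

section Labels
variable {h : ℕ} {I : Finset ℕ} {σ τ : ℕ → Equiv.Perm ℕ}

@[simp] lemma parentStr_length (υ : ℕ → Equiv.Perm ℕ) (x : List Bool) :
    (parentStr υ x).length = x.length - 1 := by
  simp [parentStr]

@[simp] lemma starLabel_length (I : Finset ℕ) (τ : ℕ → Equiv.Perm ℕ) (x : List Bool) :
    (starLabel I τ x).length = x.length := by
  simp [starLabel]

@[simp] lemma sParent_length (I : Finset ℕ) (τ : ℕ → Equiv.Perm ℕ) (y : List (Option Bool)) :
    (sParent I τ y).length = y.length - 1 := by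
  simp [sParent]

lemma IsNonInteractingSwap.isLabel_mul (hσ : IsNonInteractingSwap h I σ) (hτ : IsLabel h τ) :
    IsLabel h (fun ℓ => σ ℓ * τ ℓ) :=
  fun ℓ j hℓ hj => (hσ.fixesFrom ℓ).mul (hτ.fixesFrom hℓ) j hj

lemma permList_starLabel (hτ : IsLabel h τ) {x : List Bool} (hx : x.length ≤ h) :
    permList (τ x.length) (starLabel I τ x) = sigmaStar I (permList (τ x.length) x) :=
  permList_permList_inv (by simpa using hτ.fixesFrom hx)

lemma isStarStr_starLabel (hτ : IsLabel h τ) {x : List Bool} (hx : x.length ≤ h) :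
    IsStarStr I (permList (τ (starLabel I τ x).length) (starLabel I τ x)) := by
  rw [starLabel_length, permList_starLabel hτ hx]
  exact isStarStr_sigmaStar I _

lemma isStarStr_sParent (hτ : IsLabel h τ) {y : List (Option Bool)} (hy : y.length ≤ h + 1) :
    IsStarStr I (permList (τ (sParent I τ y).length) (sParent I τ y)) := by
  have hfix := hτ.fixesFrom (ℓ := y.length - 1) (by omega)
  rw [sParent_length, sParent, permList_permList_inv (by simpa using hfix)]
  exact isStarStr_sigmaStar I _

lemma sParent_starLabel (hτ : IsLabel h τ) {n : ℕ} {x : List Bool} (hx : x.length = n + 1)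
    (hxh : n + 1 ≤ h) :
    sParent I τ (starLabel I τ x) =
      permList (τ n)⁻¹ (sigmaStar I (permList (τ (n + 1)) x).dropLast) := by
  have := permList_starLabel (I := I) hτ (hx ▸ hxh)
  rw [hx] at this
  rw [sParent, starLabel_length, hx, this, plainDrop_sigmaStar, Nat.add_sub_cancel]

lemma starLabel_parentStr_mul (hτ : IsLabel h τ) {ρ : ℕ → Equiv.Perm ℕ} {n : ℕ}
    {x : List Bool} (hx : x.length = n + 1) (hxh : n + 1 ≤ h)
    (hρ : FixesFrom (ρ (n + 1)) (n + 1))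
    (hcore : ∀ u : List Bool, u.length = n + 1 →
      sigmaStar I (permList (ρ n)⁻¹ (permList (ρ (n + 1)) u).dropLast) =
        sigmaStar I u.dropLast) :
    starLabel I τ (parentStr (fun ℓ => ρ ℓ * τ ℓ) x) = sParent I τ (starLabel I τ x) := by
  have hτn : FixesFrom (τ n) n := hτ.fixesFrom (by omega)
  rw [sParent_starLabel hτ hx hxh, starLabel, parentStr_length, hx, Nat.add_sub_cancel,
    parentStr, hx, Nat.add_sub_cancel, mul_inv_rev,
    permList_mul (by simpa [hx] using hτn.inv), ← permList_mul (by simpa [hx] using hτn),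
    mul_inv_cancel, permList_one, permList_mul (by simpa [hx] using hρ),
    hcore _ (by simp [hx])]

lemma starLabel_parentStr_swap (hσ : IsNonInteractingSwap h I σ) (hτ : IsLabel h τ)
    {x : List Bool} (hx₁ : 1 ≤ x.length) (hx : x.length ≤ h) :
    starLabel I τ (parentStr (fun ℓ => σ ℓ * τ ℓ) x) = sParent I τ (starLabel I τ x) := by
  obtain ⟨n, hn⟩ : ∃ n, x.length = n + 1 := ⟨x.length - 1, by omega⟩
  exact starLabel_parentStr_mul hτ hn (hn ▸ hx) (hσ.fixesFrom _)
    fun u hu => sigmaStar_permList_dropLast hσ u hu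

lemma starLabel_parentStr (hτ : IsLabel h τ) {x : List Bool} (hx₁ : 1 ≤ x.length)
    (hx : x.length ≤ h) : starLabel I τ (parentStr τ x) = sParent I τ (starLabel I τ x) := by
  obtain ⟨n, hn⟩ : ∃ n, x.length = n + 1 := ⟨x.length - 1, by omega⟩
  simpa using starLabel_parentStr_mul (I := I) (ρ := 1) hτ hn (hn ▸ hx) (fun _ _ => rfl)
    fun u _ => by simp

end Labels

section Fibres
variable {h : ℕ} {I : Finset ℕ} {τ υ : ℕ → Equiv.Perm ℕ}

/-- The last bit of `s`, for the label string `x = ῡ s`. -/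
def lastBit (υ : ℕ → Equiv.Perm ℕ) (x : List Bool) : Bool :=
  (permList (υ x.length) x).getLastD false

/-- The last two bits of `s`, for the label string `y = τ̄ σ⋆ s` (a starred bit reads `false`). -/
def lastTwoBits (τ : ℕ → Equiv.Perm ℕ) (y : List (Option Bool)) : Bool × Bool :=
  let s := unstar (permList (τ y.length) y)
  (s.getLastD false, s.dropLast.getLastD false)

lemma eq_of_parentStr_eq (hυ : IsLabel h υ) {x x' : List Bool} (hx₁ : 1 ≤ x.length)
    (hx'₁ : 1 ≤ x'.length) (hx : x.length ≤ h) (hp : parentStr υ x = parentStr υ x')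
    (hb : lastBit υ x = lastBit υ x') : x = x' := by
  have hlen : x.length = x'.length := by
    have := congrArg List.length hp
    simp only [parentStr_length] at this
    omega
  refine permList_injective hlen (hυ.fixesFrom hx) ?_
  rw [parentStr, parentStr, ← hlen] at hp
  refine List.eq_of_dropLast_eq_of_getLastD_eq (d := false) (by simp [hlen])
    (permList_injective (by simp [hlen]) ?_ hp) (by simpa [lastBit, hlen] using hb)
  simpa using (hυ.fixesFrom (ℓ := x.length - 1) (by omega)).inv

lemma eq_of_starLabel_eq (hτ : IsLabel h τ) {x x' : List Bool} (hx : x.length ≤ h)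
    (hs : starLabel I τ x = starLabel I τ x') (hb : lastBit τ x = lastBit τ x') : x = x' := by
  have hlen : x.length = x'.length := by simpa using congrArg List.length hs
  refine permList_injective hlen (hτ.fixesFrom hx) ?_
  rw [starLabel, starLabel, ← hlen] at hs
  have hdrop := congrArg plainDrop
    (permList_injective (by simp [hlen]) (by simpa using (hτ.fixesFrom hx).inv) hs)
  rw [plainDrop_sigmaStar, plainDrop_sigmaStar] at hdrop
  exact List.eq_of_dropLast_eq_of_getLastD_eq (by simp [hlen]) hdrop
    (by simpa [lastBit, hlen] using hb)

lemma eq_of_sParent_eq (hτ : IsLabel h τ) {y y' : List (Option Bool)} (hy₁ : 1 ≤ y.length)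
    (hy'₁ : 1 ≤ y'.length) (hy : y.length ≤ h) (hstar : IsStarStr I (permList (τ y.length) y))
    (hstar' : IsStarStr I (permList (τ y'.length) y')) (hp : sParent I τ y = sParent I τ y')
    (hb : lastTwoBits τ y = lastTwoBits τ y') : y = y' := by
  have hlen : y.length = y'.length := by
    have := congrArg List.length hp
    simp only [sParent_length] at this
    omega
  rw [← hlen] at hstar'
  refine permList_injective hlen (hτ.fixesFrom hy) ?_
  rw [← sigmaStar_unstar hstar, ← sigmaStar_unstar hstar']
  rw [sParent, sParent, ← hlen, plainDrop_eq_dropLast_unstar,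
    plainDrop_eq_dropLast_unstar] at hp
  have hss := permList_injective (by simp [hlen])
    (by simpa using (hτ.fixesFrom (ℓ := y.length - 1) (by omega)).inv) hp
  have hdrop := congrArg plainDrop hss
  rw [plainDrop_sigmaStar, plainDrop_sigmaStar] at hdrop
  simp only [lastTwoBits, Prod.mk.injEq, ← hlen] at hb
  have hlen' : (unstar (permList (τ y.length) y)).length =
      (unstar (permList (τ y.length) y')).length := by
    simp [hlen]
  congr 1
  exact List.eq_of_dropLast_eq_of_getLastD_eq hlen'
    (List.eq_of_dropLast_eq_of_getLastD_eq (by simp [hlen']) hdrop hb.2) hb.1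

end Fibres

section Complexes
open Matrix
variable {h : ℕ} {I : Finset ℕ} {σ τ : ℕ → Equiv.Perm ℕ}

def treeChild (h : ℕ) (e : TreeE h) : TreeV h := ⟨e.1, e.2.2⟩

def treeParent (h : ℕ) (υ : ℕ → Equiv.Perm ℕ) (e : TreeE h) : TreeV h :=
  ⟨parentStr υ e.1, by simp only [parentStr_length]; omega⟩

def sChild (h : ℕ) (I : Finset ℕ) (τ : ℕ → Equiv.Perm ℕ) (e : SE h I τ) : SV h I τ :=
  ⟨e.1, e.2.2⟩

def sParentVertex (hτ : IsLabel h τ) (e : SE h I τ) : SV h I τ :=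
  ⟨sParent I τ e.1, by simp only [sParent_length]; omega, isStarStr_sParent hτ (by omega)⟩

def starVertex (hτ : IsLabel h τ) (v : TreeV h) : SV h I τ :=
  ⟨starLabel I τ v.1, by simpa using v.2, isStarStr_starLabel hτ v.2⟩

def starEdge (hτ : IsLabel h τ) (e : TreeE h) : SE h I τ :=
  ⟨starLabel I τ e.1, by simpa using e.2.1, by simpa using e.2.2, isStarStr_starLabel hτ e.2.2⟩

lemma treeParent_length_lt (υ : ℕ → Equiv.Perm ℕ) (e : TreeE h) :
    (treeParent h υ e).1.length < (treeChild h e).1.length := by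
  simp only [treeParent, treeChild, parentStr_length]
  have := e.2.1
  omega

lemma sParentVertex_length_lt (hτ : IsLabel h τ) (e : SE h I τ) :
    (sParentVertex hτ e).1.length < (sChild h I τ e).1.length := by
  simp only [sParentVertex, sChild, sParent_length]
  have := e.2.1
  omega

lemma treeMat_eq_graphMat (υ : ℕ → Equiv.Perm ℕ) :
    treeMat h υ = graphMat (treeChild h) (treeParent h υ) := by
  rw [← graphMat_eq_ite fun e he => (treeParent_length_lt υ e).ne (by rw [he])]
  ext v e
  simp only [treeMat, of_apply, Subtype.ext_iff]
  rfl

lemma sMat_eq_graphMat (hτ : IsLabel h τ) :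
    sMat h I τ = graphMat (sChild h I τ) (sParentVertex hτ) := by
  rw [← graphMat_eq_ite fun e he => (sParentVertex_length_lt hτ e).ne (by rw [he])]
  ext v e
  simp only [sMat, of_apply, Subtype.ext_iff]
  rfl

lemma starVertex_treeParent_swap (hσ : IsNonInteractingSwap h I σ) (hτ : IsLabel h τ)
    (e : TreeE h) :
    starVertex (I := I) hτ (treeParent h (fun ℓ => σ ℓ * τ ℓ) e) =
      sParentVertex hτ (starEdge hτ e) :=
  Subtype.ext (starLabel_parentStr_swap hσ hτ e.2.1 e.2.2)

lemma starVertex_treeParent (hτ : IsLabel h τ) (e : TreeE h) :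
    starVertex (I := I) hτ (treeParent h τ e) = sParentVertex hτ (starEdge hτ e) :=
  Subtype.ext (starLabel_parentStr hτ e.2.1 e.2.2)

lemma card_SV_eq_card_SE_add_one (h : ℕ) (I : Finset ℕ) (τ : ℕ → Equiv.Perm ℕ) :
    Fintype.card (SV h I τ) = Fintype.card (SE h I τ) + 1 := by
  classical
  let root : SV h I τ := ⟨[], by simp, by simp [IsStarStr, permList]⟩
  have hroot : ∀ v : SV h I τ, v ≠ root ↔ 1 ≤ v.1.length := fun v => by
    simp [root, Subtype.ext_iff, Nat.one_le_iff_ne_zero]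
  let e : SE h I τ ≃ {v : SV h I τ // v ≠ root} :=
    { toFun e := ⟨sChild h I τ e, (hroot _).mpr e.2.1⟩
      invFun v := ⟨v.1.1, (hroot _).mp v.2, v.1.2⟩
      left_inv _ := rfl
      right_inv _ := rfl }
  rw [Fintype.card_congr e, Fintype.card_subtype_compl, Fintype.card_subtype_eq]
  have := Fintype.card_pos_iff.mpr ⟨root⟩
  omega

end Complexes

section Cone
open Matrix
variable {h : ℕ} {I : Finset ℕ} {σ τ : ℕ → Equiv.Perm ℕ}

lemma treeChild_injective : Function.Injective (treeChild h) := fun _ _ he =>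
  Subtype.ext (by simpa [treeChild] using he)

lemma sChild_injective : Function.Injective (sChild h I τ) := fun _ _ he =>
  Subtype.ext (by simpa [sChild] using he)

lemma dA_eq_graphMat :
    dA h σ τ = graphMat (Sum.map (treeChild h) (treeChild h))
      (Sum.map (treeParent h fun ℓ => σ ℓ * τ ℓ) (treeParent h τ)) := by
  rw [dA, treeMat_eq_graphMat, treeMat_eq_graphMat, fromBlocks_graphMat]

lemma dB_eq_graphMat (hτ : IsLabel h τ) :
    dB h I σ τ = graphMat (Sum.map (treeChild h) (Sum.map (sChild h I τ) (treeChild h)))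
      (Sum.map (treeParent h fun ℓ => σ ℓ * τ ℓ)
        (Sum.map (sParentVertex hτ) (treeParent h τ))) := by
  rw [dB, treeMat_eq_graphMat, treeMat_eq_graphMat, sMat_eq_graphMat hτ, fromBlocks_graphMat,
    fromBlocks_graphMat]

lemma g0_eq_graphMat (hτ : IsLabel h τ) :
    g0 h I τ = graphMat (Sum.map id Sum.inr)
      fun a => Sum.inr (Sum.inl (starVertex hτ (a.elim id id))) := by
  ext (w | y | w) (v | v) <;> simp [g0, graphMat_apply, starVertex, Subtype.ext_iff]

lemma g1_eq_graphMat (hτ : IsLabel h τ) :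
    g1 h I τ = graphMat (Sum.map id Sum.inr)
      fun a => Sum.inr (Sum.inl (starEdge hτ (a.elim id id))) := by
  ext (w | y | w) (v | v) <;> simp [g1, graphMat_apply, starEdge, Subtype.ext_iff]

lemma coneD1_eq_fromCols : coneD1 h I σ τ = fromCols (g0 h I τ) (dB h I σ τ) := by
  ext v (c | c) <;> rfl

lemma coneD1_eq_graphMat (hτ : IsLabel h τ) :
    coneD1 h I σ τ = graphMat
      (Sum.elim (Sum.map id Sum.inr) (Sum.map (treeChild h) (Sum.map (sChild h I τ) (treeChild h))))
      (Sum.elim (fun a => Sum.inr (Sum.inl (starVertex hτ (a.elim id id))))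
        (Sum.map (treeParent h fun ℓ => σ ℓ * τ ℓ)
          (Sum.map (sParentVertex hτ) (treeParent h τ)))) := by
  rw [coneD1_eq_fromCols, g0_eq_graphMat hτ, dB_eq_graphMat hτ, fromCols_graphMat]

lemma coneD2_eq_fromRows : coneD2 h I σ τ = fromRows (dA h σ τ) (g1 h I τ) := by
  ext (r | r) c <;> rfl

theorem g0_mul_dA_eq_dB_mul_g1 (hσ : IsNonInteractingSwap h I σ) (hτ : IsLabel h τ) :
    g0 h I τ * dA h σ τ = dB h I σ τ * g1 h I τ := by
  rw [g0_eq_graphMat hτ, dA_eq_graphMat, dB_eq_graphMat hτ, g1_eq_graphMat hτ]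
  refine graphMat_mul_graphMat_comm (by rintro (x | x) <;> rfl) (by rintro (x | x) <;> rfl)
    (by rintro (x | x) <;> rfl) ?_
  rintro (x | x)
  · exact congrArg (Sum.inr ∘ Sum.inl) (starVertex_treeParent_swap hσ hτ x)
  · exact congrArg (Sum.inr ∘ Sum.inl) (starVertex_treeParent hτ x)

lemma injective_mulVec_dA : Function.Injective (dA h σ τ).mulVec := by
  rw [dA_eq_graphMat]
  exact injective_mulVec_graphMat (treeChild_injective.sumMap treeChild_injective)
    (Sum.elim (·.1.length) (·.1.length)) (by rintro (e | e) <;> exact treeParent_length_lt _ e)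

lemma injective_mulVec_dB (hτ : IsLabel h τ) : Function.Injective (dB h I σ τ).mulVec := by
  rw [dB_eq_graphMat hτ]
  exact injective_mulVec_graphMat
    (treeChild_injective.sumMap (sChild_injective.sumMap treeChild_injective))
    (Sum.elim (·.1.length) (Sum.elim (·.1.length) (·.1.length)))
    (by rintro (e | e | e) <;> first
      | exact treeParent_length_lt _ e | exact sParentVertex_length_lt hτ e)

lemma exists_dA_mulVec_eq {a : TreeV h ⊕ TreeV h → F2} {b : TreeE h ⊕ (SE h I τ ⊕ TreeE h) → F2}
    (hab : g0 h I τ *ᵥ a = dB h I σ τ *ᵥ b) : ∃ a₁, dA h σ τ *ᵥ a₁ = a := by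
  refine ⟨Sum.elim (b ∘ Sum.inl) (b ∘ Sum.inr ∘ Sum.inr), funext fun v => ?_⟩
  rcases v with w | w
  · simpa [g0, dA, dB, mulVec, dotProduct, Fintype.sum_sum_type] using
      (congrFun hab (Sum.inl w)).symm
  · simpa [g0, dA, dB, mulVec, dotProduct, Fintype.sum_sum_type] using
      (congrFun hab (Sum.inr (Sum.inr w))).symm

end Cone

section Weights
open Matrix
variable {h : ℕ} {I : Finset ℕ} {σ τ υ : ℕ → Equiv.Perm ℕ}

lemma ncard_fiber_le_one {α β : Type*} {f : α → β} (hf : Function.Injective f) (b : β) :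
    {a | f a = b}.ncard ≤ 1 :=
  (ncard_fiber_le f (fun _ => ()) (fun _ _ he _ => hf he) b).trans_eq Nat.card_unique

lemma ncard_treeParent_fiber_le (hυ : IsLabel h υ) (w : TreeV h) :
    {e | treeParent h υ e = w}.ncard ≤ 2 :=
  (ncard_fiber_le _ (fun e => lastBit υ e.1) (fun e e' he hb => Subtype.ext
    (eq_of_parentStr_eq hυ e.2.1 e'.2.1 e.2.2 (Subtype.ext_iff.mp he) hb)) w).trans_eq
    (by simp)

lemma ncard_sParentVertex_fiber_le (hτ : IsLabel h τ) (y : SV h I τ) :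
    {e | sParentVertex hτ e = y}.ncard ≤ 4 :=
  (ncard_fiber_le _ (fun e => lastTwoBits τ e.1) (fun e e' he hb => Subtype.ext
    (eq_of_sParent_eq hτ e.2.1 e'.2.1 e.2.2.1 e.2.2.2 e'.2.2.2 (Subtype.ext_iff.mp he) hb))
    y).trans_eq (by simp)

lemma ncard_starVertex_fiber_le (hτ : IsLabel h τ) (y : SV h I τ) :
    {v | starVertex hτ v = y}.ncard ≤ 2 :=
  (ncard_fiber_le _ (fun v => lastBit τ v.1) (fun v _ he hb => Subtype.ext
    (eq_of_starLabel_eq hτ v.2 (Subtype.ext_iff.mp he) hb)) y).trans_eq (by simp)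

lemma ncard_starEdge_fiber_le (hτ : IsLabel h τ) (y : SE h I τ) :
    {e | starEdge hτ e = y}.ncard ≤ 2 :=
  (ncard_fiber_le _ (fun e => lastBit τ e.1) (fun e _ he hb => Subtype.ext
    (eq_of_starLabel_eq hτ e.2.2 (Subtype.ext_iff.mp he) hb)) y).trans_eq (by simp)

theorem colW_coneD2_le (hτ : IsLabel h τ) : ∀ c, colW (coneD2 h I σ τ) c ≤ 4 := by
  intro c
  rw [coneD2_eq_fromRows, colW_fromRows, dA_eq_graphMat, g1_eq_graphMat hτ]
  exact add_le_add (colW_graphMat_le _ _ c) (colW_graphMat_le _ _ c)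

theorem colW_coneD1_le (hτ : IsLabel h τ) : ∀ c, colW (coneD1 h I σ τ) c ≤ 2 := by
  rw [coneD1_eq_graphMat hτ]
  exact colW_graphMat_le _ _

theorem rowW_coneD2_le (hσ : IsNonInteractingSwap h I σ) (hτ : IsLabel h τ) :
    ∀ r, rowW (coneD2 h I σ τ) r ≤ 4 := by
  rw [coneD2_eq_fromRows]
  rintro (a | b)
  · have hc := ncard_fiber_le_one (treeChild_injective (h := h))
    rw [rowW_fromRows_inl, dA_eq_graphMat]
    refine (rowW_graphMat_le _ _ a).trans ?_
    rcases a with w | w <;> simp only [ncard_setOf_sum, Sum.map_inl, Sum.map_inr, Sum.inl.injEq,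
      Sum.inr.injEq, reduceCtorEq, Set.ofPred_false, Set.ncard_empty, add_zero, zero_add]
    · linarith [hc w, ncard_treeParent_fiber_le (hσ.isLabel_mul hτ) w]
    · linarith [hc w, ncard_treeParent_fiber_le hτ w]
  · rw [rowW_fromRows_inr, g1_eq_graphMat hτ]
    refine (rowW_graphMat_le _ _ b).trans ?_
    rcases b with x | y | x <;> simp only [ncard_setOf_sum, Sum.map_inl, Sum.map_inr,
      Sum.elim_inl, Sum.elim_inr, id_eq, Sum.inl.injEq, Sum.inr.injEq, reduceCtorEq,
      Set.ofPred_false, Set.ofPred_eq_eq_singleton, Set.ncard_empty, Set.ncard_singleton, add_zero,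
      zero_add, Nat.one_le_ofNat]
    linarith [ncard_starEdge_fiber_le hτ y]

theorem rowW_coneD1_le (hσ : IsNonInteractingSwap h I σ) (hτ : IsLabel h τ) :
    ∀ r, rowW (coneD1 h I σ τ) r ≤ 9 := by
  have hc := ncard_fiber_le_one (treeChild_injective (h := h))
  rw [coneD1_eq_graphMat hτ]
  intro r
  refine (rowW_graphMat_le _ _ r).trans ?_
  rcases r with w | y | w <;> simp only [ncard_setOf_sum, Sum.elim_inl, Sum.elim_inr, Sum.map_inl,
    Sum.map_inr, id_eq, Sum.inl.injEq, Sum.inr.injEq, reduceCtorEq, Set.ofPred_false,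
    Set.ofPred_eq_eq_singleton, Set.ncard_empty, Set.ncard_singleton, add_zero, zero_add]
  · linarith [hc w, ncard_treeParent_fiber_le (hσ.isLabel_mul hτ) w]
  · linarith [ncard_fiber_le_one (sChild_injective (h := h) (I := I) (τ := τ)) y,
      ncard_starVertex_fiber_le hτ y, ncard_sParentVertex_fiber_le hτ y]
  · linarith [hc w, ncard_treeParent_fiber_le hτ w]

end Weights

section Homology
variable {h : ℕ} {I : Finset ℕ} {σ τ : ℕ → Equiv.Perm ℕ}

theorem H2Trivial_coneD2 : H2Trivial (coneD2 h I σ τ) :=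
  coneD2_eq_fromRows ▸ H2Trivial_fromRows injective_mulVec_dA

theorem H1Trivial_coneD2_coneD1 (hσ : IsNonInteractingSwap h I σ) (hτ : IsLabel h τ) :
    H1Trivial (coneD2 h I σ τ) (coneD1 h I σ τ) := by
  rw [coneD2_eq_fromRows, coneD1_eq_fromCols]
  exact H1Trivial_fromRows_fromCols (g0_mul_dA_eq_dB_mul_g1 hσ hτ) (injective_mulVec_dB hτ)
    fun _ _ => exists_dA_mulVec_eq

theorem H0IsF2_coneD1 (hσ : IsNonInteractingSwap h I σ) (hτ : IsLabel h τ) :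
    H0IsF2 (coneD1 h I σ τ) := by
  have : Nonempty (TreeV h ⊕ (SV h I τ ⊕ TreeV h)) := ⟨Sum.inl ⟨[], by simp⟩⟩
  refine H0IsF2_of_euler H2Trivial_coneD2 (H1Trivial_coneD2_coneD1 hσ hτ) (fun c => ?_) ?_
  · rw [coneD1_eq_graphMat hτ]
    exact sum_graphMat_apply _ _ c
  · simp only [Fintype.card_sum, card_SV_eq_card_SE_add_one]
    ring

end Homology

theorem stmt3_general (h : ℕ) (I : Finset ℕ) (σ τ : ℕ → Equiv.Perm ℕ)
    (hσ : IsNonInteractingSwap h I σ) (hτ : IsLabel h τ) :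
    -- g is a chain map
    g0 h I τ * dA h σ τ = dB h I σ τ * g1 h I τ ∧
    -- H₂(C) = 0, H₁(C) = 0, H₀(C) ≅ F₂
    H2Trivial (coneD2 h I σ τ) ∧
    H1Trivial (coneD2 h I σ τ) (coneD1 h I σ τ) ∧
    H0IsF2 (coneD1 h I σ τ) ∧
    -- weights
    (∀ c, colW (coneD2 h I σ τ) c ≤ 4) ∧
    (∀ r, rowW (coneD2 h I σ τ) r ≤ 4) ∧
    (∀ c, colW (coneD1 h I σ τ) c ≤ 2) ∧
    (∀ r, rowW (coneD1 h I σ τ) r ≤ 9) :=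
  ⟨g0_mul_dA_eq_dB_mul_g1 hσ hτ, H2Trivial_coneD2, H1Trivial_coneD2_coneD1 hσ hτ,
    H0IsF2_coneD1 hσ hτ, colW_coneD2_le hτ, rowW_coneD2_le hσ hτ, colW_coneD1_le hτ,
    rowW_coneD1_le hσ hτ⟩

theorem stmt3 (h : ℕ) (hh : 1 ≤ h) (I : Finset ℕ) (σ τ : ℕ → Equiv.Perm ℕ)
    (hσ : IsNonInteractingSwap h I σ) (hτ : IsLabel h τ) :
    -- g is a chain map
    g0 h I τ * dA h σ τ = dB h I σ τ * g1 h I τ ∧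
    -- H₂(C) = 0, H₁(C) = 0, H₀(C) ≅ F₂
    H2Trivial (coneD2 h I σ τ) ∧
    H1Trivial (coneD2 h I σ τ) (coneD1 h I σ τ) ∧
    H0IsF2 (coneD1 h I σ τ) ∧
    -- weights
    (∀ c, colW (coneD2 h I σ τ) c ≤ 4) ∧
    (∀ r, rowW (coneD2 h I σ τ) r ≤ 4) ∧
    (∀ c, colW (coneD1 h I σ τ) c ≤ 2) ∧
    (∀ r, rowW (coneD1 h I σ τ) r ≤ 9) :=
  stmt3_general h I σ τ hσ hτ
end

section
/- Let h₀, h₁ ≥ 1 and h = h₀ + h₁, and let τ_h be the permutation of {1,…,h} for which, for every bit string s₁⋯s_h, the reordered string is s_{h₀+1}⋯s_h s₁⋯s_{h₀} (i.e. the block transposition exchanging the first h₀ positions with the last h₁ positions). Then there exist h permutations π¹,…,πʰ of {1,…,h}, each of which is a product of transpositions of the form (i, i+1) over a set of pairwise disjoint pairs {i, i+1}, such that πʰ ∘ ⋯ ∘ π¹ = τ_h. -/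
/-- `π` is a non-interacting layer of adjacent transpositions of the positions
`{0, …, h-1}` (0-indexed): it is the product of the transpositions of positions `i, i+1`
over a set `J` of indices such that the pairs `{i, i+1}`, `i ∈ J`, are pairwise disjoint. -/
def IsNILayer (h : ℕ) (π : Equiv.Perm ℕ) : Prop :=
  ∃ J : Finset ℕ,
    (∀ i ∈ J, i + 2 ≤ h) ∧
    (∀ i ∈ J, ∀ j ∈ J, i ≠ j → i + 2 ≤ j ∨ j + 2 ≤ i) ∧
    (∀ i ∈ J, π i = i + 1 ∧ π (i + 1) = i) ∧
    (∀ p, (∀ i ∈ J, p ≠ i ∧ p ≠ i + 1) → π p = p)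

theorem getD_permList {α : Type*} [Inhabited α] (π : Equiv.Perm ℕ) {l : List α} {j : ℕ}
    (hj : j < l.length) : (permList π l).getD j default = l.getD (π.symm j) default := by
  rw [permList, List.getD_eq_getElem _ _ (by simpa using hj)]
  simp

theorem getD_map_range_decide_eq {n q : ℕ} (hq : q < n) (i : ℕ) :
    ((List.range n).map fun j => decide (j = q)).getD i false = decide (i = q) := by
  rcases lt_or_ge i n with hi | hi
  · rw [List.getD_eq_getElem _ _ (by simpa using hi)]
    simp
  · rw [List.getD_eq_default _ _ (by simpa using hi)]
    simp only [Bool.false_eq, decide_eq_false_iff_not]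
    omega

theorem symm_apply_of_permList_eq_rotate {π : Equiv.Perm ℕ} {n k : ℕ}
    (hπ : ∀ s : List Bool, s.length = n → permList π s = s.rotate k) {j : ℕ} (hj : j < n) :
    π.symm j = (j + k) % n := by
  set q := (j + k) % n
  set s := (List.range n).map fun i => decide (i = q)
  have hs : s.length = n := by simp [s]
  have hq : q < n := Nat.mod_lt _ (by omega)
  have key := congrArg (List.getD · j (default : Bool)) (hπ s hs)
  rw [getD_permList π (hs ▸ hj), List.getD_eq_getElem (s.rotate k) _ (by simpa [hs] using hj),
    List.getElem_rotate, show (default : Bool) = false from rfl,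
    getD_map_range_decide_eq hq] at key
  simpa [s, q] using key

-- At `p = 0` the test `J (p - 1)` is `J 0`, already excluded by the first branch.
open Classical in
noncomputable def adjSwapFun (J : ℕ → Prop) (p : ℕ) : ℕ :=
  if J p then p + 1 else if J (p - 1) then p - 1 else p

theorem adjSwapFun_involutive {J : ℕ → Prop} (hJ : ∀ p, J p → ¬ J (p + 1)) :
    Function.Involutive (adjSwapFun J) := by
  intro p
  by_cases hp : J p
  · simp [adjSwapFun, hp, hJ p hp]
  by_cases hp' : J (p - 1)
  · have hp_pos : p - 1 + 1 = p := by
      rcases p with _ | p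
      · exact absurd hp' hp
      · rfl
    simp [adjSwapFun, hp, hp', hp_pos]
  · simp [adjSwapFun, hp, hp']

noncomputable def adjSwapLayer (J : ℕ → Prop) (hJ : ∀ p, J p → ¬ J (p + 1)) : Equiv.Perm ℕ :=
  (adjSwapFun_involutive hJ).toPerm

section adjSwapLayer

variable {J : ℕ → Prop} {hJ : ∀ p, J p → ¬ J (p + 1)} {p : ℕ}

theorem adjSwapLayer_apply_of_mem (hp : J p) : adjSwapLayer J hJ p = p + 1 := by
  simp [adjSwapLayer, adjSwapFun, hp]

theorem adjSwapLayer_apply_of_pred_mem (hp : ¬ J p) (hp' : J (p - 1)) :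
    adjSwapLayer J hJ p = p - 1 := by
  simp [adjSwapLayer, adjSwapFun, hp, hp']

theorem adjSwapLayer_apply_of_not_mem (hp : ¬ J p) (hp' : ¬ J (p - 1)) :
    adjSwapLayer J hJ p = p := by
  simp [adjSwapLayer, adjSwapFun, hp, hp']

theorem isNILayer_adjSwapLayer {h : ℕ} (hJh : ∀ p, J p → p + 2 ≤ h) :
    IsNILayer h (adjSwapLayer J hJ) := by
  classical
  have mem : ∀ {i}, i ∈ (Finset.range h).filter J ↔ J i := fun {i} => by
    simpa using fun hi => by have := hJh i hi; omega
  refine ⟨(Finset.range h).filter J, fun i hi => hJh i (mem.1 hi), ?_, ?_, ?_⟩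
  · intro i hi j hj hij
    by_contra hne
    rcases (by omega : j = i + 1 ∨ i = j + 1) with rfl | rfl
    · exact hJ i (mem.1 hi) (mem.1 hj)
    · exact hJ j (mem.1 hj) (mem.1 hi)
  · intro i hi
    refine ⟨adjSwapLayer_apply_of_mem (mem.1 hi), ?_⟩
    exact adjSwapLayer_apply_of_pred_mem (hJ i (mem.1 hi)) (mem.1 hi)
  · intro q hq
    refine adjSwapLayer_apply_of_not_mem (fun h' => (hq q (mem.2 h')).1 rfl) (fun h' => ?_)
    have := hq _ (mem.2 h')
    omega

end adjSwapLayer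

namespace BlockSwap

variable (h₀ h₁ : ℕ)

-- In round `t` the `A` starting at `k` sits at `p` with `p + h₀ = 2 * k + t + 1` and swaps with
-- the `B` starting at `t + k + 1`, whenever `h₀ ≤ t + k + 1 < h₀ + h₁`.
def IsSwapSite (t p : ℕ) : Prop :=
  (p + h₀ + t + 1) % 2 = 0 ∧ t + 1 ≤ p + h₀ ∧ p < h₀ + t + 1 ∧ h₀ ≤ p + t + 1 ∧
    p + t + 1 < h₀ + 2 * h₁

-- Where the particle starting at `x` is after `t` rounds; truncated subtraction makes the
-- distance travelled `0` before it starts moving.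
def track (t x : ℕ) : ℕ :=
  if x < h₀ then x + min h₁ (t + x + 1 - h₀)
  else if x < h₀ + h₁ then x - min h₀ (t + h₀ - x)
  else x

theorem track_zero (x : ℕ) : track h₀ h₁ 0 x = x := by
  unfold track
  split_ifs <;> omega

theorem not_isSwapSite_succ {t p : ℕ} (hp : IsSwapSite h₀ h₁ t p) :
    ¬ IsSwapSite h₀ h₁ t (p + 1) := by
  unfold IsSwapSite at *
  omega

noncomputable def layer (t : ℕ) : Equiv.Perm ℕ :=
  adjSwapLayer (IsSwapSite h₀ h₁ t) fun _ => not_isSwapSite_succ h₀ h₁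

theorem isNILayer_layer (t : ℕ) : IsNILayer (h₀ + h₁) (layer h₀ h₁ t) :=
  isNILayer_adjSwapLayer fun p hp => by unfold IsSwapSite at hp; omega

theorem layer_track (t x : ℕ) : layer h₀ h₁ t (track h₀ h₁ t x) = track h₀ h₁ (t + 1) x := by
  rw [layer]
  by_cases hp : IsSwapSite h₀ h₁ t (track h₀ h₁ t x)
  · rw [adjSwapLayer_apply_of_mem hp]
    unfold track IsSwapSite at *
    split_ifs at * <;> omega
  by_cases hp' : IsSwapSite h₀ h₁ t (track h₀ h₁ t x - 1)
  · rw [adjSwapLayer_apply_of_pred_mem hp hp']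
    unfold track IsSwapSite at *
    split_ifs at * <;> omega
  · rw [adjSwapLayer_apply_of_not_mem hp hp']
    unfold track IsSwapSite at *
    split_ifs at * <;> omega

theorem prod_layers_apply (m x : ℕ) :
    (List.ofFn fun k : Fin m => layer h₀ h₁ k).reverse.prod x = track h₀ h₁ m x := by
  induction m with
  | zero => rw [track_zero]; rfl
  | succ m ih =>
    rw [List.ofFn_succ', List.concat_eq_append, List.reverse_concat', List.prod_cons,
      Equiv.Perm.mul_apply]
    simp only [Fin.val_castSucc, Fin.val_last]
    rw [ih, layer_track]

theorem track_lt {t x : ℕ} (hx : x < h₀ + h₁) : track h₀ h₁ t x < h₀ + h₁ := by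
  unfold track
  split_ifs <;> omega

theorem track_of_le {t x : ℕ} (hx : h₀ + h₁ ≤ x) : track h₀ h₁ t x = x := by
  unfold track
  split_ifs <;> omega

theorem track_add_mod {x : ℕ} (hx : x < h₀ + h₁) :
    (track h₀ h₁ (h₀ + h₁) x + h₀) % (h₀ + h₁) = x := by
  unfold track
  split_ifs with hx₀
  · rw [show x + min h₁ (h₀ + h₁ + x + 1 - h₀) + h₀ = x + (h₀ + h₁) by omega,
      Nat.add_mod_right, Nat.mod_eq_of_lt hx]
  · rw [show x - min h₀ (h₀ + h₁ + h₀ - x) + h₀ = x by omega, Nat.mod_eq_of_lt hx]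

end BlockSwap

theorem stmt16_general (h₀ h₁ : ℕ)
    (π : Equiv.Perm ℕ)
    (hfix : ∀ p, h₀ + h₁ ≤ p → π p = p)
    (hact : ∀ s : List Bool, s.length = h₀ + h₁ →
      permList π s = s.drop h₀ ++ s.take h₀) :
    ∃ f : Fin (h₀ + h₁) → Equiv.Perm ℕ,
      (∀ k, IsNILayer (h₀ + h₁) (f k)) ∧
      (List.ofFn f).reverse.prod = π := by
  refine ⟨fun k => BlockSwap.layer h₀ h₁ k, fun k => BlockSwap.isNILayer_layer h₀ h₁ k, ?_⟩
  have hrot : ∀ s : List Bool, s.length = h₀ + h₁ → permList π s = s.rotate h₀ := fun s hs => by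
    rw [hact s hs, List.rotate_eq_drop_append_take (by omega)]
  ext x
  rw [BlockSwap.prod_layers_apply]
  rcases lt_or_ge x (h₀ + h₁) with hx | hx
  · rw [eq_comm, ← Equiv.eq_symm_apply, symm_apply_of_permList_eq_rotate hrot
      (BlockSwap.track_lt h₀ h₁ hx), BlockSwap.track_add_mod h₀ h₁ hx]
  · rw [hfix x hx, BlockSwap.track_of_le h₀ h₁ hx]

theorem stmt16 (h₀ h₁ : ℕ) (hh₀ : 1 ≤ h₀) (hh₁ : 1 ≤ h₁)
    (π : Equiv.Perm ℕ)
    (hfix : ∀ p, h₀ + h₁ ≤ p → π p = p)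
    (hact : ∀ s : List Bool, s.length = h₀ + h₁ →
      permList π s = s.drop h₀ ++ s.take h₀) :
    ∃ f : Fin (h₀ + h₁) → Equiv.Perm ℕ,
      (∀ k, IsNILayer (h₀ + h₁) (f k)) ∧
      (List.ofFn f).reverse.prod = π :=
  stmt16_general h₀ h₁ π hfix hact
end

section
/- Let 𝛔 be a non-interacting SWAP of height h with indices I, let s be an ℓ-bit string with ℓ ≤ h, and let 0 ≤ m < ℓ. Then σ⋆(ω^m(σ_ℓ s)) = σ⋆(σ_{ℓ−m}(ω^m s)); in particular, σ⋆(ω(σ_ℓ s)) = σ⋆(σ_{ℓ−1}(ωs)). -/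
/-- `s` is a `τL`-truncation: `s` is a prefix of some element of `τ_h L`. -/
def IsTrunc (τh : Equiv.Perm ℕ) (L : Finset (List Bool)) (s : List Bool) : Prop :=
  ∃ t ∈ L, s <+: permList τh t

/-- `s` is `τL`-branching: either `s` is empty, or `s ∈ τ_h L`, or `0 < ‖s‖ < h` and both
`s0` and `s1` are `τL`-truncations. -/
def IsBranching (h : ℕ) (τh : Equiv.Perm ℕ) (L : Finset (List Bool)) (s : List Bool) :
    Prop :=
  s = [] ∨ (∃ t ∈ L, s = permList τh t) ∨
    (0 < s.length ∧ s.length < h ∧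
      IsTrunc τh L (s ++ [false]) ∧ IsTrunc τh L (s ++ [true]))

/-- The branching truncation `Ω^{τL} s`: the longest strict prefix of `s` that is
`τL`-branching. -/
noncomputable def Omega (h : ℕ) (τh : Equiv.Perm ℕ) (L : Finset (List Bool))
    (s : List Bool) : List Bool :=
  s.take (sSup {k | k < s.length ∧ IsBranching h τh L (s.take k)})

/-!
The permutations `σ_ℓ` and `σ_{ℓ-m}` act identically on the first `ℓ - m` positions, except
at the left end `i` of a swapped pair `{i, i+1}` that the truncation to length `ℓ - m` cuts in
half. Such a pair forces `i = ℓ - m - 1 ∈ I`, so the disagreement sits at the last position of an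
`(ℓ - m)`-bit string, which is exactly the position that `σ⋆` overwrites with `⋆`.
Since `σ_{ℓ-m}` permutes the first `ℓ - m` positions among themselves, truncating before or after
permuting reads the same bits everywhere else.
-/

theorem List.dropLast_iterate {α : Type*} (m : ℕ) (l : List α) :
    dropLast^[m] l = l.take (l.length - m) := by
  induction m generalizing l with
  | zero => simp
  | succ m ih =>
    rw [Function.iterate_succ_apply, ih, dropLast_eq_take, take_take, length_take]
    congr 1
    omega

theorem List.getD_take {α : Type*} (l : List α) (d : α) {n k : ℕ} (hk : k < n) :
    (l.take n).getD k d = l.getD k d := by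
  simp [getD_eq_getElem?_getD, hk]

section permList

variable {α : Type*} [Inhabited α] (π : Equiv.Perm ℕ) (l : List α)

@[simp]
theorem length_permList : (permList π l).length = l.length := by
  simp [permList]

theorem getElem_permList {j : ℕ} (hj : j < (permList π l).length) :
    (permList π l)[j] = l.getD (π.symm j) default := by
  simp [permList]

end permList

namespace IsNonInteractingSwap

variable {h : ℕ} {I : Finset ℕ} {σ : ℕ → Equiv.Perm ℕ}

theorem apply_eq_ite (hσ : IsNonInteractingSwap h I σ) (ℓ j : ℕ) :
    σ ℓ j = if j ∈ I ∧ j + 2 ≤ ℓ then j + 1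
      else if 0 < j ∧ j - 1 ∈ I ∧ j + 1 ≤ ℓ then j - 1 else j := by
  obtain ⟨-, -, hswap, hfix⟩ := hσ
  split_ifs with hleft hright
  · exact (hswap ℓ j hleft.1 hleft.2).1
  · obtain ⟨hj, hI, hjℓ⟩ := hright
    simpa [Nat.sub_add_cancel hj] using (hswap ℓ (j - 1) hI (by omega)).2
  · refine hfix ℓ j ?_
    rintro ⟨i, hi, hiℓ, hji | hji⟩
    · exact hleft ⟨hji ▸ hi, by omega⟩
    · exact hright ⟨by omega, by simpa [hji] using hi, by omega⟩

theorem apply_apply (hσ : IsNonInteractingSwap h I σ) (ℓ j : ℕ) : σ ℓ (σ ℓ j) = j := by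
  obtain ⟨-, -, hswap, hfix⟩ := hσ
  by_cases hj : ∃ i ∈ I, i + 2 ≤ ℓ ∧ (j = i ∨ j = i + 1)
  · obtain ⟨i, hi, hiℓ, hji | hji⟩ := hj
    · rw [hji, (hswap ℓ i hi hiℓ).1, (hswap ℓ i hi hiℓ).2]
    · rw [hji, (hswap ℓ i hi hiℓ).2, (hswap ℓ i hi hiℓ).1]
  · rw [hfix ℓ j hj, hfix ℓ j hj]

theorem symm_apply (hσ : IsNonInteractingSwap h I σ) (ℓ j : ℕ) : (σ ℓ).symm j = σ ℓ j :=
  (σ ℓ).symm_apply_eq.mpr (hσ.apply_apply ℓ j).symm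

theorem apply_lt (hσ : IsNonInteractingSwap h I σ) {n j : ℕ} (hj : j < n) : σ n j < n := by
  rw [hσ.apply_eq_ite]
  split_ifs <;> omega

theorem apply_eq_apply_of_le (hσ : IsNonInteractingSwap h I σ) {ℓ n j : ℕ} (hn : n ≤ ℓ)
    (hj : j < n) (hcut : j ∈ I → j + 2 ≤ n) : σ n j = σ ℓ j := by
  rw [hσ.apply_eq_ite, hσ.apply_eq_ite]
  by_cases hjI : j ∈ I <;> by_cases hjI' : j - 1 ∈ I <;> simp [hjI, hjI'] at hcut ⊢ <;>
    split_ifs <;> omega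

end IsNonInteractingSwap

theorem sigmaStar_congr_s17 {I : Finset ℕ} {l₁ l₂ : List Bool} (hlen : l₁.length = l₂.length)
    (hget : ∀ j (h₁ : j < l₁.length) (h₂ : j < l₂.length),
      (j + 1 < l₁.length ∨ l₁.length - 1 ∉ I) → l₁[j] = l₂[j]) :
    sigmaStar I l₁ = sigmaStar I l₂ := by
  unfold sigmaStar
  have hne : l₁ ≠ [] ↔ l₂ ≠ [] := by simp only [← List.length_pos_iff, hlen]
  by_cases hstar : l₁ ≠ [] ∧ l₁.length - 1 ∈ I
  · have hstar₂ : l₂ ≠ [] ∧ l₂.length - 1 ∈ I := hlen ▸ ⟨hne.mp hstar.1, hstar.2⟩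
    rw [if_pos hstar, if_pos hstar₂]
    congr 2
    refine List.ext_getElem (by simp [hlen]) fun j h₁ h₂ => ?_
    simp only [List.length_dropLast] at h₁ h₂
    simp only [List.getElem_dropLast]
    exact hget j (by omega) (by omega) (Or.inl (by omega))
  · have hstar₂ : ¬(l₂ ≠ [] ∧ l₂.length - 1 ∈ I) := fun h₂ =>
      hstar ⟨hne.mpr h₂.1, hlen ▸ h₂.2⟩
    rw [if_neg hstar, if_neg hstar₂]
    congr 1
    refine List.ext_getElem hlen fun j h₁ h₂ => hget j h₁ h₂ (Or.inr fun hI => hstar ?_)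
    exact ⟨List.ne_nil_of_length_pos (by omega), hI⟩

theorem IsNonInteractingSwap.sigmaStar_dropLast_iterate_permList {h : ℕ} {I : Finset ℕ}
    {σ : ℕ → Equiv.Perm ℕ} (hσ : IsNonInteractingSwap h I σ) (s : List Bool) (m : ℕ) :
    sigmaStar I (List.dropLast^[m] (permList (σ s.length) s)) =
      sigmaStar I (permList (σ (s.length - m)) (List.dropLast^[m] s)) := by
  rw [List.dropLast_iterate, List.dropLast_iterate, length_permList]
  refine sigmaStar_congr_s17 (by simp) fun j h₁ h₂ hcut => ?_
  simp only [List.length_take, length_permList, min_eq_left (Nat.sub_le _ _)] at h₁ hcut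
  have hagree : σ (s.length - m) j = σ s.length j :=
    hσ.apply_eq_apply_of_le (Nat.sub_le _ _) h₁ fun hjI => by
      by_contra hcross
      refine hcut.resolve_left (by omega) ?_
      rwa [show s.length - m - 1 = j by omega]
  rw [List.getElem_take, getElem_permList, getElem_permList, hσ.symm_apply, hσ.symm_apply,
    List.getD_take _ _ (hσ.apply_lt h₁), hagree]

theorem stmt17_general (h : ℕ) (I : Finset ℕ) (σ : ℕ → Equiv.Perm ℕ)
    (hσ : IsNonInteractingSwap h I σ)
    (s : List Bool) :
    (∀ m, m < s.length →
      sigmaStar I (List.dropLast^[m] (permList (σ s.length) s)) =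
        sigmaStar I (permList (σ (s.length - m)) (List.dropLast^[m] s))) ∧
    (0 < s.length →
      sigmaStar I ((permList (σ s.length) s).dropLast) =
        sigmaStar I (permList (σ (s.length - 1)) s.dropLast)) :=
  ⟨fun m _ => hσ.sigmaStar_dropLast_iterate_permList s m,
    fun _ => hσ.sigmaStar_dropLast_iterate_permList s 1⟩

theorem stmt17 (h : ℕ) (I : Finset ℕ) (σ : ℕ → Equiv.Perm ℕ)
    (hσ : IsNonInteractingSwap h I σ)
    (s : List Bool) (hs : s.length ≤ h) :
    (∀ m, m < s.length →
      sigmaStar I (List.dropLast^[m] (permList (σ s.length) s)) =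
        sigmaStar I (permList (σ (s.length - m)) (List.dropLast^[m] s))) ∧
    (0 < s.length →
      sigmaStar I ((permList (σ s.length) s).dropLast) =
        sigmaStar I (permList (σ (s.length - 1)) s.dropLast)) :=
  stmt17_general h I σ hσ s
end
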